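/- (Every exclusion zone is the closure of a single vertex.) Let T=(V,E) be an unweighted tree with deterministic Graph-IRV. Then every nonempty IRV exclusion zone S⊆V satisfies S=cl(s) for some vertex s∈S, where cl denotes the reachability closure in the pairwise-loss graph L(T). -/
import Mathlib


section IRVCore

variable {V : Type*} [Fintype V] [DecidableEq V] [Nonempty V]

/-- The preference key of voter `x` for candidate `c`: lexicographic in
(distance, candidate id), smaller preferred. -/
def voterKey (d : V → V → ℕ) (idv : V → ℕ) (x c : V) : Lex (ℕ × ℕ) :=
  toLex (d x c, idv c)

/-- Voter `x`'s top remaining candidate among the candidate set `K`. -/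
noncomputable def topChoice (d : V → V → ℕ) (idv : V → ℕ) (x : V) (K : Finset V) : V :=
  if h : K.Nonempty then (Finset.exists_min_image K (voterKey d idv x) h).choose
  else Classical.arbitrary V

/-- Plurality score of candidate `c` within candidate set `K`. -/
noncomputable def plurality (d : V → V → ℕ) (idv : V → ℕ) (K : Finset V) (c : V) : ℕ :=
  (Finset.univ.filter fun x : V => topChoice d idv x K = c).card

/-- Elimination key: minimize plurality score, break ties toward the largest id. -/
noncomputable def elimKey (d : V → V → ℕ) (idv : V → ℕ) (K : Finset V) (c : V) :
    Lex (ℤ × ℤ) :=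
  toLex ((plurality d idv K c : ℤ), -(idv c : ℤ))

/-- The candidate eliminated in the current round. -/
noncomputable def roundLoser (d : V → V → ℕ) (idv : V → ℕ) (K : Finset V) : V :=
  if h : K.Nonempty then (Finset.exists_min_image K (elimKey d idv K) h).choose
  else Classical.arbitrary V

lemma roundLoser_mem (d : V → V → ℕ) (idv : V → ℕ) {K : Finset V} (h : K.Nonempty) :
    roundLoser d idv K ∈ K := by
  unfold roundLoser
  rw [dif_pos h]
  exact (Finset.exists_min_image K (elimKey d idv K) h).choose_spec.1

/-- The IRV winner on candidate set `K`. -/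
noncomputable def irvWinner (d : V → V → ℕ) (idv : V → ℕ) (K : Finset V) : V :=
  if h : 2 ≤ K.card then irvWinner d idv (K.erase (roundLoser d idv K))
  else if h2 : K.Nonempty then h2.choose else Classical.arbitrary V
termination_by K.card
decreasing_by
  exact Finset.card_erase_lt_of_mem (roundLoser_mem d idv (Finset.card_pos.mp (by omega)))

/-- `Kill d idv u A`: some candidate set `K` with `u ∈ K ⊆ A ∪ {u}` makes `u` lose. -/
def Kill (d : V → V → ℕ) (idv : V → ℕ) (u : V) (A : Set V) : Prop :=
  ∃ K : Finset V, u ∈ K ∧ ↑K ⊆ insert u A ∧ irvWinner d idv K ≠ u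

/-- `S` is an IRV exclusion zone. -/
def ExclusionZone (d : V → V → ℕ) (idv : V → ℕ) (S : Set V) : Prop :=
  ∀ K : Finset V, K.Nonempty → (∃ c ∈ K, c ∈ S) → irvWinner d idv K ∈ S

end IRVCore

/-- The pairwise-loss relation (edge `x → y` of the pairwise-loss graph `L(T)`):
`x` loses the two-candidate IRV election with candidate set `{x,y}`. -/
def losesTo {V : Type*} [Fintype V] [DecidableEq V] [Nonempty V]
    (d : V → V → ℕ) (idv : V → ℕ) (x y : V) : Prop :=
  x ≠ y ∧ irvWinner d idv {x, y} ≠ x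

lemma irvWinner_mem {V : Type*} [Fintype V] [DecidableEq V] [Nonempty V]
    (d : V → V → ℕ) (idv : V → ℕ) (K : Finset V) (h : K.Nonempty) :
    irvWinner d idv K ∈ K := by
  induction K using Finset.strongInduction with
  | _ K ih =>
    rw [irvWinner]
    by_cases h2 : 2 ≤ K.card
    · rw [dif_pos h2]
      have hm := roundLoser_mem d idv (K := K) (Finset.card_pos.mp (by omega))
      have hsub : K.erase (roundLoser d idv K) ⊂ K := Finset.erase_ssubset hm
      have hne' : (K.erase (roundLoser d idv K)).Nonempty := by
        rw [← Finset.card_pos, Finset.card_erase_of_mem hm]; omega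
      exact (Finset.erase_subset _ _) (ih _ hsub hne')
    · rw [dif_neg h2, dif_pos h]
      exact h.choose_spec

lemma tournament_king {α : Type*} (r : α → α → Prop) (F : Finset α)
    (htour : ∀ a ∈ F, ∀ b ∈ F, a ≠ b → r a b ∨ r b a) (hne : F.Nonempty) :
    ∃ s ∈ F, ∀ v ∈ F, Relation.ReflTransGen r s v := by
  classical
  induction F using Finset.induction_on with
  | empty => simp at hne
  | @insert a F' ha ih =>
    by_cases hF' : F'.Nonempty
    · obtain ⟨s, hs, hreach⟩ :=
        ih (fun x hx y hy => htour x (Finset.mem_insert_of_mem hx) y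
          (Finset.mem_insert_of_mem hy)) hF'
      have hane : a ≠ s := fun h => ha (h ▸ hs)
      rcases htour a (Finset.mem_insert_self a F') s (Finset.mem_insert_of_mem hs) hane with
        h | h
      · refine ⟨a, Finset.mem_insert_self a F', fun v hv => ?_⟩
        rcases Finset.mem_insert.mp hv with rfl | hv
        · exact Relation.ReflTransGen.refl
        · exact Relation.ReflTransGen.head h (hreach v hv)
      · refine ⟨s, Finset.mem_insert_of_mem hs, fun v hv => ?_⟩
        rcases Finset.mem_insert.mp hv with rfl | hv
        · exact Relation.ReflTransGen.single h
        · exact hreach v hv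
    · obtain rfl := Finset.not_nonempty_iff_eq_empty.mp hF'
      refine ⟨a, Finset.mem_insert_self a ∅, fun v hv => ?_⟩
      rcases Finset.mem_insert.mp hv with rfl | hv
      · exact Relation.ReflTransGen.refl
      · simp at hv

/-- **Every exclusion zone is the closure of a single vertex.**  On a tree with
deterministic Graph-IRV, every nonempty IRV exclusion zone `S` equals the reachability
closure `cl(s)` of a single vertex `s ∈ S` in the pairwise-loss graph `L(T)`. -/
theorem exclusion_zone_single_generator {V : Type*} [Fintype V] [DecidableEq V]
    [Nonempty V]
    (G : SimpleGraph V) (hG : G.IsTree)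
    (idv : V → ℕ) (hid : Function.Injective idv)
    (S : Set V) (hne : S.Nonempty) (hS : ExclusionZone G.dist idv S) :
    ∃ s ∈ S, {v | Relation.ReflTransGen (losesTo G.dist idv) s v} = S := by
  classical
  set d := G.dist
  set r := losesTo d idv with hr
  -- S is closed under losesTo edges
  have hstep : ∀ x ∈ S, ∀ y, r x y → y ∈ S := by
    intro x hx y ⟨hxy, hwin⟩
    have hKne : ({x, y} : Finset V).Nonempty := ⟨x, by simp⟩
    have hwS : irvWinner d idv {x, y} ∈ S := hS _ hKne ⟨x, by simp, hx⟩
    have hmem := irvWinner_mem d idv {x, y} hKne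
    rcases Finset.mem_insert.mp hmem with h | h
    · exact absurd h hwin
    · rwa [Finset.mem_singleton.mp h] at hwS
  have hclosed : ∀ x ∈ S, ∀ y, Relation.ReflTransGen r x y → y ∈ S := by
    intro x hx y hxy
    induction hxy with
    | refl => exact hx
    | tail _ hbc ih => exact hstep _ ih _ hbc
  -- tournament property
  have htour : ∀ a b : V, a ≠ b → r a b ∨ r b a := by
    intro a b hab
    have hKne : ({a, b} : Finset V).Nonempty := ⟨a, by simp⟩
    have hmem := irvWinner_mem d idv {a, b} hKne
    by_cases h : irvWinner d idv {a, b} = a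
    · right
      refine ⟨hab.symm, ?_⟩
      rw [Finset.pair_comm b a, h]
      exact hab
    · exact Or.inl ⟨hab, h⟩
  -- the finset of S
  set F : Finset V := Finset.univ.filter (· ∈ S) with hF
  have hFmem : ∀ v, v ∈ F ↔ v ∈ S := by intro v; simp [hF]
  have hFne : F.Nonempty := hne.imp fun v hv => (hFmem v).mpr hv
  obtain ⟨s, hsF, hking⟩ := tournament_king r F
    (fun a _ b _ hab => htour a b hab) hFne
  refine ⟨s, (hFmem s).mp hsF, Set.ext fun v => ?_⟩
  constructor
  · exact fun hv => hclosed s ((hFmem s).mp hsF) v hv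
  · exact fun hv => hking v ((hFmem v).mpr hv)
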